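/- Let n ≥ 1 and let {D_l}_{l∈ι} be a finite nonempty family of real n×m_l matrices with every column of every D_l summing to zero. Let λ > 0 satisfy: for every l ∈ ι and every δ ∈ ℝⁿ with Σ_i δ_i = 0, δᵀ(D_l D_lᵀ)δ ≥ λ·‖δ‖₂². Set m̲ = min_l m_l and m̄ = max_l m_l. Let Ω be a predefined-time consensus function with data (Ω̂, β, d), let T_c > 0, and for each l let the gains κ^{(l)}_e (one per column e of D_l) satisfy κ^{(l)}_e ≥ β(m̲)^d/(λ·β(m̄)²·T_c). Define F_l : ℝ^{m_l} → ℝ^{m_l} by F_l(v)_e = κ^{(l)}_e·Ω(|v_e|)/v_e if v_e ≠ 0 and F_l(v)_e = 0 if v_e = 0. Let z* ∈ ℝⁿ be a position realizing a feasible displacement requirement, let σ : [t₀,∞) → ι be arbitrary, and let z : [t₀,∞) → ℝⁿ be differentiable with ż(t) = −D_{σ(t)}·F_{σ(t)}(D_{σ(t)}ᵀ·(z(t) − z*)) for all t ≥ t₀. Then for all t ≥ t₀ + T_c, z(t) = z* + α·𝟏 with α = (1/n)Σ_{j=1}^n (z_j(t₀) − z*_j); in particular z_j(t) − z_i(t)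 = z*_j − z*_i for all i, j, so the desired formation is reached within the predefined time T_c. -/

import Mathlib

/-!
Writing `x = z - z*`, the update rule is a consensus protocol in `x`. Zero column sums make
`∑ᵢ xᵢ` invariant, so `δ = x - α𝟏` has zero sum and the disagreement `V = ‖δ‖²` satisfies
`V' = -2 ∑ₑ yₑ Fₑ(y)` with `y = Dᵀx`, a sum of the terms `κₑ Ω(|yₑ|)` over the edges with `yₑ ≠ 0`.

If `Ω 0 = 0`, the Rayleigh bound, the defining inequality of `Ω̂` and the gain condition give
`2 Ω̂(√W) ≤ -T_c W'` for `W = λ β(m̄)² V`. Then `G(√W(s)) + (s - t₀) / T_c` is nonincreasing,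
where `G x = ∫₀ˣ u / Ω̂(u) du` lies in `(0, 1]` for `x > 0`, so `W` vanishes before `t₀ + T_c`.

If `Ω 0 > 0`, then `V'` is either `0` or at most `-2 κ Ω(0)`. By Darboux's theorem it cannot
switch between the two, and it cannot stay below `-2 κ Ω(0)` forever since `V ≥ 0`; so `V' ≡ 0`,
which forces `y(t₀) = 0` and hence `V ≡ 0`.
-/

open Matrix MeasureTheory

/-- A predefined-time consensus function Ω with data (Ω̂, β, d): Ω is monotonically
increasing and nonnegative on [0,∞); Ω̂ is monotonically increasing on [0,∞), positive on
(0,∞) and Ω̂(z)/z is continuous on (0,∞); β is nonincreasing and positive; d ≥ 1;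
Ω̂(β(n)‖x‖₂) ≤ β(n)^d Σᵢ Ω(xᵢ) for all n ≥ 1 and nonnegative x ∈ ℝⁿ; and
∫₀^∞ z/Ω̂(z) dz = 1. -/
def IsPredefinedTimeConsensusFunction (Ω Ωhat : ℝ → ℝ) (β : ℕ → ℝ) (d : ℝ) : Prop :=
  Monotone Ω ∧ (∀ z : ℝ, 0 ≤ z → 0 ≤ Ω z) ∧
  MonotoneOn Ωhat (Set.Ici 0) ∧ (∀ z : ℝ, 0 < z → 0 < Ωhat z) ∧
  ContinuousOn (fun z => Ωhat z / z) (Set.Ioi 0) ∧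
  Antitone β ∧ (∀ n : ℕ, 0 < β n) ∧ 1 ≤ d ∧
  (∀ n : ℕ, 1 ≤ n → ∀ x : Fin n → ℝ, (∀ i, 0 ≤ x i) →
    Ωhat (β n * Real.sqrt (∑ i, x i ^ 2)) ≤ β n ^ d * ∑ i, Ω (x i)) ∧
  (∫ z in Set.Ioi (0:ℝ), z / Ωhat z) = 1

open Set

section ZeroColumnSums

variable {α ε : Type*} [Fintype α] {D : Matrix α ε ℝ}

theorem sum_mulVec_eq_zero [Fintype ε] (hD : ∀ j, ∑ i, D i j = 0) (w : ε → ℝ) :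
    ∑ i, (D *ᵥ w) i = 0 := by
  simp only [mulVec, dotProduct]
  rw [Finset.sum_comm]
  simp [← Finset.sum_mul, hD]

theorem transpose_mulVec_sub_const (hD : ∀ j, ∑ i, D i j = 0) (v : α → ℝ) (c : ℝ) :
    Dᵀ *ᵥ (fun i => v i - c) = Dᵀ *ᵥ v := by
  ext e
  simp [mulVec, dotProduct, mul_sub, Finset.sum_sub_distrib, ← Finset.sum_mul, hD]

theorem sub_const_dotProduct_mulVec [Fintype ε] (hD : ∀ j, ∑ i, D i j = 0) (v : α → ℝ) (c : ℝ)
    (w : ε → ℝ) : (fun i => v i - c) ⬝ᵥ (D *ᵥ w) = (Dᵀ *ᵥ v) ⬝ᵥ w := by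
  rw [dotProduct_mulVec, ← mulVec_transpose, transpose_mulVec_sub_const hD]

end ZeroColumnSums

theorem dotProduct_mul_transpose_mulVec {α ε : Type*} [Fintype α] [Fintype ε]
    (D : Matrix α ε ℝ) (v : α → ℝ) : v ⬝ᵥ ((D * Dᵀ) *ᵥ v) = ∑ e, (Dᵀ *ᵥ v) e ^ 2 := by
  rw [← mulVec_mulVec, dotProduct_mulVec, ← mulVec_transpose]
  simp only [dotProduct, sq]

theorem sum_sub_mean_eq_zero {n : ℕ} {v w : Fin n → ℝ} (h : ∑ i, v i = ∑ i, w i) :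
    ∑ i, (v i - (1 / (n : ℝ)) * ∑ j, w j) = 0 := by
  rw [Finset.sum_sub_distrib, h]
  rcases Nat.eq_zero_or_pos n with rfl | hn
  · simp
  · simp [field]

theorem eq_of_sum_sub_sq_eq_zero {α : Type*} [Fintype α] {v : α → ℝ} {μ : ℝ}
    (h : ∑ i, (v i - μ) ^ 2 = 0) (i : α) : v i = μ := by
  have := (Finset.sum_eq_zero_iff_of_nonneg fun i _ => sq_nonneg (v i - μ)).1 h i
    (Finset.mem_univ i)
  linarith [pow_eq_zero_iff two_ne_zero |>.1 this]

theorem mul_apply_eq_ite {ε : Type*} {Ω : ℝ → ℝ} {κ : ε → ℝ} {F : (ε → ℝ) → ε → ℝ}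
    (hF : ∀ v e, F v e = if v e = 0 then 0 else κ e * Ω |v e| / v e)
    (v : ε → ℝ) (e : ε) : v e * F v e = if v e = 0 then 0 else κ e * Ω |v e| := by
  rw [hF]
  split_ifs with h
  · simp
  · field_simp

section EdgePower

variable {ε : Type*} [Fintype ε] {Ω : ℝ → ℝ} {κ : ε → ℝ} {F : (ε → ℝ) → ε → ℝ}

theorem dotProduct_apply_nonneg (hF : ∀ v e, F v e = if v e = 0 then 0 else κ e * Ω |v e| / v e)
    (hκ : ∀ e, 0 ≤ κ e) (hΩ : ∀ z, 0 ≤ z → 0 ≤ Ω z) (v : ε → ℝ) : 0 ≤ v ⬝ᵥ F v :=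
  Finset.sum_nonneg fun e _ => by
    rw [mul_apply_eq_ite hF]
    split_ifs
    exacts [le_rfl, mul_nonneg (hκ e) (hΩ _ (abs_nonneg _))]

theorem mul_sum_le_dotProduct_apply
    (hF : ∀ v e, F v e = if v e = 0 then 0 else κ e * Ω |v e| / v e) {κ₀ : ℝ}
    (hκ : ∀ e, κ₀ ≤ κ e) (hΩ : ∀ z, 0 ≤ z → 0 ≤ Ω z) (hΩ0 : Ω 0 = 0) (v : ε → ℝ) :
    κ₀ * ∑ e, Ω |v e| ≤ v ⬝ᵥ F v := by
  rw [Finset.mul_sum]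
  refine Finset.sum_le_sum fun e _ => ?_
  rw [mul_apply_eq_ite hF]
  split_ifs with h
  · simp [h, hΩ0]
  · exact mul_le_mul_of_nonneg_right (hκ e) (hΩ _ (abs_nonneg _))

theorem mul_le_dotProduct_apply_of_ne_zero
    (hF : ∀ v e, F v e = if v e = 0 then 0 else κ e * Ω |v e| / v e) {κ₀ : ℝ} (hκ₀ : 0 ≤ κ₀)
    (hκ : ∀ e, κ₀ ≤ κ e) (hmono : Monotone Ω) (hΩ : ∀ z, 0 ≤ z → 0 ≤ Ω z) {v : ε → ℝ}
    (hv : v ≠ 0) : κ₀ * Ω 0 ≤ v ⬝ᵥ F v := by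
  obtain ⟨e, he⟩ := Function.ne_iff.1 hv
  have hterm : κ₀ * Ω 0 ≤ v e * F v e := by
    rw [mul_apply_eq_ite hF, if_neg (by simpa using he)]
    exact mul_le_mul (hκ e) (hmono (abs_nonneg _)) (hΩ 0 le_rfl) (hκ₀.trans (hκ e))
  refine hterm.trans (Finset.single_le_sum (f := fun e => v e * F v e) (fun e' _ => ?_)
    (Finset.mem_univ e))
  rw [mul_apply_eq_ite hF]
  split_ifs
  exacts [le_rfl, mul_nonneg (hκ₀.trans (hκ e')) (hΩ _ (abs_nonneg _))]

end EdgePower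

theorem IsPredefinedTimeConsensusFunction.Ωhat_mul_sqrt_le {Ω Ωhat : ℝ → ℝ} {β : ℕ → ℝ}
    {d : ℝ} (hΩ : IsPredefinedTimeConsensusFunction Ω Ωhat β d) {k N M : ℕ} (hk : 1 ≤ k)
    (hN : N ≤ k) (hM : k ≤ M) (y : Fin k → ℝ) {r : ℝ} (hr : r ≤ ∑ e, y e ^ 2) :
    Ωhat (β M * √r) ≤ β N ^ d * ∑ e, Ω |y e| := by
  obtain ⟨-, hΩ_nonneg, hmono, -, -, hanti, hpos, hd, hkey, -⟩ := hΩ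
  have hy : ∑ e, y e ^ 2 = ∑ e, |y e| ^ 2 := by simp only [sq_abs]
  calc Ωhat (β M * √r) ≤ Ωhat (β k * √(∑ e, |y e| ^ 2)) := by
        refine hmono (mul_nonneg (hpos M).le (Real.sqrt_nonneg _))
          (mul_nonneg (hpos k).le (Real.sqrt_nonneg _)) ?_
        rw [← hy]
        exact mul_le_mul (hanti hM) (Real.sqrt_le_sqrt hr) (Real.sqrt_nonneg _) (hpos k).le
    _ ≤ β k ^ d * ∑ e, Ω |y e| := hkey k hk _ fun e => abs_nonneg _
    _ ≤ β N ^ d * ∑ e, Ω |y e| :=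
        mul_le_mul_of_nonneg_right
          (Real.rpow_le_rpow (hpos k).le (hanti hN) (by linarith))
          (Finset.sum_nonneg fun e _ => hΩ_nonneg _ (abs_nonneg _))

theorem IsPredefinedTimeConsensusFunction.Ωhat_sqrt_le_dotProduct_apply {Ω Ωhat : ℝ → ℝ}
    {β : ℕ → ℝ} {d : ℝ} (hΩ : IsPredefinedTimeConsensusFunction Ω Ωhat β d) (hΩ0 : Ω 0 = 0)
    {k N M : ℕ} (hN : N ≤ k) (hM : k ≤ M) {κ : Fin k → ℝ} {F : (Fin k → ℝ) → Fin k → ℝ}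
    (hF : ∀ v e, F v e = if v e = 0 then 0 else κ e * Ω |v e| / v e) {lam Tc V : ℝ}
    (hlam : 0 < lam) (hTc : 0 < Tc) (hκ : ∀ e, β N ^ d / (lam * β M ^ 2 * Tc) ≤ κ e)
    (y : Fin k → ℝ) (hV : 0 < V) (hy : lam * V ≤ ∑ e, y e ^ 2) :
    Ωhat √(lam * β M ^ 2 * V) ≤ lam * β M ^ 2 * Tc * (y ⬝ᵥ F y) := by
  have ⟨_, hΩ_nonneg, _, _, _, _, hβ_pos, _⟩ := hΩ
  have hβM := hβ_pos M
  have ha : 0 < lam * β M ^ 2 * Tc := by positivity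
  have hk : 1 ≤ k := Nat.one_le_iff_ne_zero.2 fun hk => by
    subst hk
    simp only [Finset.univ_eq_empty, Finset.sum_empty] at hy
    nlinarith
  have hsqrt : √(lam * β M ^ 2 * V) = β M * √(lam * V) := by
    rw [show lam * β M ^ 2 * V = β M ^ 2 * (lam * V) by ring, Real.sqrt_mul (by positivity),
      Real.sqrt_sq hβM.le]
  calc Ωhat √(lam * β M ^ 2 * V) ≤ β N ^ d * ∑ e, Ω |y e| :=
        hsqrt ▸ hΩ.Ωhat_mul_sqrt_le hk hN hM y hy
    _ = lam * β M ^ 2 * Tc * (β N ^ d / (lam * β M ^ 2 * Tc) * ∑ e, Ω |y e|) := by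
        field_simp
    _ ≤ lam * β M ^ 2 * Tc * (y ⬝ᵥ F y) :=
        mul_le_mul_of_nonneg_left (mul_sum_le_dotProduct_apply hF hκ hΩ_nonneg hΩ0 y) ha.le

theorem antitoneOn_of_hasDerivAt_nonpos {S : Set ℝ} (hS : Convex ℝ S) {f f' : ℝ → ℝ}
    (hf : ∀ t ∈ S, HasDerivAt f (f' t) t) (hf' : ∀ t ∈ S, f' t ≤ 0) : AntitoneOn f S :=
  antitoneOn_of_hasDerivWithinAt_nonpos hS (fun t ht => (hf t ht).continuousAt.continuousWithinAt)
    (fun t ht => (hf t (interior_subset ht)).hasDerivWithinAt)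
    (fun t ht => hf' t (interior_subset ht))

theorem eq_zero_of_hasDerivAt_of_deriv_gap {f f' : ℝ → ℝ} {t₀ ε : ℝ} (hε : 0 < ε)
    (hf : ∀ t, t₀ ≤ t → HasDerivAt f (f' t) t) (hf_nonneg : ∀ t, t₀ ≤ t → 0 ≤ f t)
    (hgap : ∀ t, t₀ ≤ t → f' t = 0 ∨ f' t ≤ -ε) (h₀ : f' t₀ = 0 → f t₀ = 0) :
    ∀ t, t₀ ≤ t → f t = 0 := by
  have hf' : ∀ t, t₀ ≤ t → f' t = 0 := by
    intro t₁ ht₁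
    by_contra hne
    have hle : ∀ t, t₁ ≤ t → f' t ≤ -ε := by
      intro t ht
      refine (hgap t (ht₁.trans ht)).resolve_left fun h0 => ?_
      obtain ⟨c, hc, hfc⟩ := exists_hasDerivWithinAt_eq_of_gt_of_lt ht
        (fun s hs => (hf s (ht₁.trans hs.1)).hasDerivWithinAt)
        (m := -ε / 2) (by linarith [(hgap t₁ ht₁).resolve_left hne]) (by linarith)
      rcases hgap c (ht₁.trans hc.1.le) with h | h <;> linarith
    have hanti : AntitoneOn (fun t => f t + ε * t) (Ici t₁) :=
      antitoneOn_of_hasDerivAt_nonpos (convex_Ici t₁)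
        (fun t ht => (hf t (ht₁.trans ht)).add ((hasDerivAt_id t).const_mul ε))
        (fun t ht => by simp only [mul_one]; linarith [hle t ht])
    set T := t₁ + f t₁ / ε + 1
    have hT : t₁ ≤ T := by linarith [div_nonneg (hf_nonneg t₁ ht₁) hε.le]
    have h := hanti self_mem_Ici (mem_Ici.2 hT) hT
    have hfT := hf_nonneg T (ht₁.trans hT)
    have : ε * T = ε * t₁ + f t₁ + ε := by simp only [T]; field_simp
    simp only at h
    linarith
  intro t ht
  have hle := antitoneOn_of_hasDerivAt_nonpos (convex_Ici t₀) hf (fun s hs => (hf' s hs).le)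
    self_mem_Ici ht ht
  linarith [h₀ (hf' t₀ le_rfl), hf_nonneg t ht]

theorem sum_eq_of_hasDerivAt_sum_eq_zero {α : Type*} [Fintype α] {x v : ℝ → α → ℝ} {t₀ : ℝ}
    (hx : ∀ s, t₀ ≤ s → HasDerivAt x (v s) s) (hv : ∀ s, t₀ ≤ s → ∑ i, v s i = 0) :
    ∀ s, t₀ ≤ s → ∑ i, x s i = ∑ i, x t₀ i := by
  have hsum : ∀ s, t₀ ≤ s → HasDerivAt (fun u => ∑ i, x u i) 0 s := fun s hs => by
    simpa [hv s hs] using HasDerivAt.fun_sum (u := Finset.univ) fun i _ =>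
      hasDerivAt_pi.1 (hx s hs) i
  intro s hs
  exact constant_of_has_deriv_right_zero
    (fun u hu => (hsum u hu.1).continuousAt.continuousWithinAt)
    (fun u hu => (hsum u hu.1).hasDerivWithinAt) s (right_mem_Icc.2 hs)

theorem hasDerivAt_sum_sub_sq {α : Type*} [Fintype α] {x : ℝ → α → ℝ} {x' : α → ℝ} {s : ℝ}
    (hx : HasDerivAt x x' s) (μ : ℝ) :
    HasDerivAt (fun u => ∑ i, (x u i - μ) ^ 2) (2 * ((fun i => x s i - μ) ⬝ᵥ x')) s := by
  have := HasDerivAt.fun_sum fun i (_ : i ∈ Finset.univ) =>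
    ((hasDerivAt_pi.1 hx i).sub_const μ).fun_pow 2
  refine this.congr_deriv ?_
  simp only [dotProduct, Finset.mul_sum]
  refine Finset.sum_congr rfl fun i _ => ?_
  push_cast
  ring

noncomputable def settlingIntegral (Ωhat : ℝ → ℝ) (x : ℝ) : ℝ :=
  ∫ u in (0 : ℝ)..x, u / Ωhat u

section SettlingIntegral

variable {Ωhat : ℝ → ℝ}

theorem integrableOn_Ioi_of_integral_eq_one (hint : ∫ z in Ioi (0 : ℝ), z / Ωhat z = 1) :
    IntegrableOn (fun z => z / Ωhat z) (Ioi 0) := by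
  by_contra h
  rw [integral_undef h] at hint
  exact zero_ne_one hint

theorem intervalIntegrable_of_integral_eq_one (hint : ∫ z in Ioi (0 : ℝ), z / Ωhat z = 1)
    {x : ℝ} (hx : 0 ≤ x) : IntervalIntegrable (fun z => z / Ωhat z) volume 0 x :=
  (intervalIntegrable_iff_integrableOn_Ioc_of_le hx).2
    ((integrableOn_Ioi_of_integral_eq_one hint).mono_set Ioc_subset_Ioi_self)

theorem settlingIntegral_pos (hpos : ∀ z, 0 < z → 0 < Ωhat z)
    (hint : ∫ z in Ioi (0 : ℝ), z / Ωhat z = 1) {x : ℝ} (hx : 0 < x) :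
    0 < settlingIntegral Ωhat x :=
  intervalIntegral.intervalIntegral_pos_of_pos_on (intervalIntegrable_of_integral_eq_one hint hx.le)
    (fun u hu => div_pos hu.1 (hpos u hu.1)) hx

theorem settlingIntegral_le_one (hpos : ∀ z, 0 < z → 0 < Ωhat z)
    (hint : ∫ z in Ioi (0 : ℝ), z / Ωhat z = 1) {x : ℝ} (hx : 0 ≤ x) :
    settlingIntegral Ωhat x ≤ 1 := by
  rw [settlingIntegral, intervalIntegral.integral_of_le hx, ← hint]
  refine setIntegral_mono_set (integrableOn_Ioi_of_integral_eq_one hint) ?_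
    Ioc_subset_Ioi_self.eventuallyLE
  filter_upwards [ae_restrict_mem measurableSet_Ioi] with u hu
  exact (div_pos hu (hpos u hu)).le

theorem hasDerivAt_settlingIntegral (hpos : ∀ z, 0 < z → 0 < Ωhat z)
    (hcont : ContinuousOn (fun z => Ωhat z / z) (Ioi 0))
    (hint : ∫ z in Ioi (0 : ℝ), z / Ωhat z = 1) {x : ℝ} (hx : 0 < x) :
    HasDerivAt (settlingIntegral Ωhat) (x / Ωhat x) x := by
  have hcont' : ContinuousOn (fun z => z / Ωhat z) (Ioi 0) :=
    (hcont.inv₀ fun z hz => (div_pos (hpos z hz) hz).ne').congr fun z _ => (inv_div _ _).symm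
  exact intervalIntegral.integral_hasDerivAt_right
    (intervalIntegrable_of_integral_eq_one hint hx.le) ((hcont'.stronglyMeasurableAtFilter isOpen_Ioi) x hx)
    (hcont'.continuousAt (isOpen_Ioi.mem_nhds hx))

theorem sub_lt_of_two_mul_Ωhat_sqrt_le (hpos : ∀ z, 0 < z → 0 < Ωhat z)
    (hcont : ContinuousOn (fun z => Ωhat z / z) (Ioi 0))
    (hint : ∫ z in Ioi (0 : ℝ), z / Ωhat z = 1) {Tc t₀ t : ℝ} (hTc : 0 < Tc)
    {W W' : ℝ → ℝ} (hW : ∀ s ∈ Icc t₀ t, HasDerivAt W (W' s) s)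
    (hW_pos : ∀ s ∈ Icc t₀ t, 0 < W s)
    (hdecay : ∀ s ∈ Icc t₀ t, 2 * Ωhat (√(W s)) ≤ -(Tc * W' s)) : t - t₀ < Tc := by
  rcases lt_or_ge t t₀ with ht | ht
  · linarith
  have hanti :
      AntitoneOn (fun s => settlingIntegral Ωhat √(W s) + (s - t₀) / Tc) (Icc t₀ t) := by
    refine antitoneOn_of_hasDerivAt_nonpos (convex_Icc t₀ t)
      (f' := fun s => √(W s) / Ωhat √(W s) * (W' s / (2 * √(W s))) + 1 / Tc)
      (fun s hs => ?_) (fun s hs => ?_)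
    · have hsqrt := (hasDerivAt_settlingIntegral hpos hcont hint
        (Real.sqrt_pos.2 (hW_pos s hs))).comp s ((hW s hs).sqrt (hW_pos s hs).ne')
      exact hsqrt.fun_add (((hasDerivAt_id s).sub_const t₀).div_const Tc)
    · have hr := Real.sqrt_pos.2 (hW_pos s hs)
      have hΩ := hpos _ hr
      have hW' : W' s / (2 * Ωhat √(W s)) ≤ -(1 / Tc) := by
        rw [div_le_iff₀ (by positivity), neg_mul, one_div_mul_eq_div, le_neg, div_le_iff₀ hTc]
        linarith [hdecay s hs]
      calc √(W s) / Ωhat √(W s) * (W' s / (2 * √(W s))) + 1 / Tc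
          = W' s / (2 * Ωhat √(W s)) + 1 / Tc := by field_simp
        _ ≤ 0 := by linarith
  have h := hanti (left_mem_Icc.2 ht) (right_mem_Icc.2 ht) ht
  have h0 := settlingIntegral_pos hpos hint (Real.sqrt_pos.2 (hW_pos t (right_mem_Icc.2 ht)))
  have h1 := settlingIntegral_le_one hpos hint (Real.sqrt_nonneg (W t₀))
  simp only [sub_self, zero_div, add_zero] at h
  have : (t - t₀) / Tc < 1 := by linarith
  rwa [div_lt_one hTc] at this

theorem eq_zero_of_two_mul_Ωhat_sqrt_le (hpos : ∀ z, 0 < z → 0 < Ωhat z)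
    (hcont : ContinuousOn (fun z => Ωhat z / z) (Ioi 0))
    (hint : ∫ z in Ioi (0 : ℝ), z / Ωhat z = 1) {Tc t₀ : ℝ} (hTc : 0 < Tc)
    {W W' : ℝ → ℝ} (hW : ∀ s, t₀ ≤ s → HasDerivAt W (W' s) s)
    (hW_nonneg : ∀ s, t₀ ≤ s → 0 ≤ W s) (hW' : ∀ s, t₀ ≤ s → W' s ≤ 0)
    (hdecay : ∀ s, t₀ ≤ s → 0 < W s → 2 * Ωhat (√(W s)) ≤ -(Tc * W' s)) :
    ∀ t, t₀ + Tc ≤ t → W t = 0 := by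
  intro t ht
  by_contra hWt
  have hanti : AntitoneOn W (Ici t₀) :=
    antitoneOn_of_hasDerivAt_nonpos (convex_Ici t₀) hW hW'
  have hW_pos : ∀ s ∈ Icc t₀ t, 0 < W s := fun s hs =>
    ((hW_nonneg t (hs.1.trans hs.2)).lt_of_ne' hWt).trans_le (hanti hs.1 (hs.1.trans hs.2) hs.2)
  have := sub_lt_of_two_mul_Ωhat_sqrt_le hpos hcont hint hTc (fun s hs => hW s hs.1) hW_pos
    fun s hs => hdecay s hs.1 (hW_pos s hs)
  linarith

end SettlingIntegral

theorem consensus_of_hasDerivAt {ι : Type} {n : ℕ} (m : ι → ℕ)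
    (D : (l : ι) → Matrix (Fin n) (Fin (m l)) ℝ) (hD : ∀ l, ∀ j, (∑ i, D l i j) = 0)
    (lam : ℝ) (hlam : 0 < lam)
    (hRay : ∀ l, ∀ δ : Fin n → ℝ, (∑ i, δ i) = 0 →
      lam * (∑ i, δ i ^ 2) ≤ δ ⬝ᵥ ((D l * (D l)ᵀ) *ᵥ δ))
    (mlow mhigh : ℕ) (hmlow : ∀ l, mlow ≤ m l) (hmhigh : ∀ l, m l ≤ mhigh)
    (Ω Ωhat : ℝ → ℝ) (β : ℕ → ℝ) (d : ℝ) (hΩ : IsPredefinedTimeConsensusFunction Ω Ωhat β d)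
    (Tc : ℝ) (hTc : 0 < Tc) (κ : (l : ι) → Fin (m l) → ℝ)
    (hκ : ∀ l e, β mlow ^ d / (lam * β mhigh ^ 2 * Tc) ≤ κ l e)
    (F : (l : ι) → (Fin (m l) → ℝ) → (Fin (m l) → ℝ))
    (hF : ∀ l v e, F l v e = if v e = 0 then 0 else κ l e * Ω |v e| / v e)
    (σ : ℝ → ι) (t₀ : ℝ) (x : ℝ → Fin n → ℝ)
    (hx : ∀ t, t₀ ≤ t → HasDerivAt x (-(D (σ t) *ᵥ F (σ t) ((D (σ t))ᵀ *ᵥ x t))) t) :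
    ∀ t, t₀ + Tc ≤ t → ∀ i, x t i = (1 / (n : ℝ)) * ∑ j, x t₀ j := by
  have ⟨hmono, hΩ_nonneg, _, hΩhat_pos, hcont, _, hβ_pos, _, _, hint⟩ := hΩ
  intro t ht
  set μ := (1 / (n : ℝ)) * ∑ j, x t₀ j
  set V := fun s => ∑ i, (x s i - μ) ^ 2
  set R := fun s => ((D (σ s))ᵀ *ᵥ x s) ⬝ᵥ F (σ s) ((D (σ s))ᵀ *ᵥ x s)
  set a := lam * β mhigh ^ 2
  set κ₀ := β mlow ^ d / (lam * β mhigh ^ 2 * Tc)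
  have ha : 0 < a := mul_pos hlam (pow_pos (hβ_pos mhigh) 2)
  have hκ₀ : 0 < κ₀ := div_pos (Real.rpow_pos_of_pos (hβ_pos mlow) d) (mul_pos ha hTc)
  have hV_nonneg : ∀ s, 0 ≤ V s := fun s => Finset.sum_nonneg fun i _ => sq_nonneg _
  have hR_nonneg : ∀ s, 0 ≤ R s := fun s =>
    dotProduct_apply_nonneg (hF (σ s)) (fun e => hκ₀.le.trans (hκ _ e)) hΩ_nonneg _
  have hV : ∀ s, t₀ ≤ s → HasDerivAt V (-2 * R s) s := fun s hs =>
    (hasDerivAt_sum_sub_sq (hx s hs) μ).congr_deriv (by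
      rw [dotProduct_neg, sub_const_dotProduct_mulVec (hD _)]; ring)
  have hlamV : ∀ s, t₀ ≤ s → lam * V s ≤ ∑ e, ((D (σ s))ᵀ *ᵥ x s) e ^ 2 := fun s hs => by
    have hsum := sum_eq_of_hasDerivAt_sum_eq_zero hx (fun u _ => by
      rw [Pi.neg_def, Finset.sum_neg_distrib, sum_mulVec_eq_zero (hD _), neg_zero]) s hs
    have := hRay (σ s) _ (sum_sub_mean_eq_zero hsum)
    rwa [dotProduct_mul_transpose_mulVec, transpose_mulVec_sub_const (hD _)] at this
  suffices hVt : V t = 0 from eq_of_sum_sub_sq_eq_zero hVt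
  by_cases hΩ0 : Ω 0 = 0
  · have hW := eq_zero_of_two_mul_Ωhat_sqrt_le hΩhat_pos hcont hint hTc
      (fun s hs => (hV s hs).const_mul a) (fun s _ => mul_nonneg ha.le (hV_nonneg s))
      (fun s _ => by nlinarith [hR_nonneg s]) (fun s hs hW => by
        linarith [hΩ.Ωhat_sqrt_le_dotProduct_apply hΩ0 (hmlow (σ s)) (hmhigh (σ s)) (hF (σ s))
          hlam hTc (hκ (σ s)) _ (pos_of_mul_pos_right hW ha.le) (hlamV s hs)]) t ht
    exact (mul_eq_zero.1 hW).resolve_left ha.ne'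
  · have hR : ∀ s, (D (σ s))ᵀ *ᵥ x s ≠ 0 → κ₀ * Ω 0 ≤ R s := fun s hy =>
      mul_le_dotProduct_apply_of_ne_zero (hF (σ s)) hκ₀.le (hκ (σ s)) hmono hΩ_nonneg hy
    have hc : 0 < κ₀ * Ω 0 := mul_pos hκ₀ ((hΩ_nonneg 0 le_rfl).lt_of_ne' hΩ0)
    refine eq_zero_of_hasDerivAt_of_deriv_gap (mul_pos two_pos hc) hV (fun s _ => hV_nonneg s)
      (fun s _ => ?_) (fun hR₀ => ?_) t (by linarith)
    · by_cases hy : (D (σ s))ᵀ *ᵥ x s = 0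
      · left; simp [R, hy]
      · right; linarith [hR s hy]
    · have hy₀ : (D (σ t₀))ᵀ *ᵥ x t₀ = 0 := by
        by_contra hy
        linarith [hR t₀ hy]
      have := hlamV t₀ le_rfl
      simp only [hy₀, Pi.zero_apply, zero_pow two_ne_zero, Finset.sum_const_zero] at this
      nlinarith [hV_nonneg t₀]

theorem stmt18_general {ι : Type} {n : ℕ}
    (m : ι → ℕ) (D : (l : ι) → Matrix (Fin n) (Fin (m l)) ℝ)
    (hD : ∀ l, ∀ j, (∑ i, D l i j) = 0)
    (lam : ℝ) (hlam : 0 < lam)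
    (hRay : ∀ l, ∀ δ : Fin n → ℝ, (∑ i, δ i) = 0 →
      lam * (∑ i, δ i ^ 2) ≤ δ ⬝ᵥ ((D l * (D l)ᵀ).mulVec δ))
    (mlow mhigh : ℕ)
    (hmlow : IsLeast (Set.range m) mlow) (hmhigh : IsGreatest (Set.range m) mhigh)
    (Ω Ωhat : ℝ → ℝ) (β : ℕ → ℝ) (d : ℝ)
    (hΩ : IsPredefinedTimeConsensusFunction Ω Ωhat β d)
    (Tc : ℝ) (hTc : 0 < Tc)
    (κ : (l : ι) → Fin (m l) → ℝ)
    (hκ : ∀ l e, β mlow ^ d / (lam * β mhigh ^ 2 * Tc) ≤ κ l e)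
    (F : (l : ι) → (Fin (m l) → ℝ) → (Fin (m l) → ℝ))
    (hF : ∀ l v e, F l v e = if v e = 0 then 0 else κ l e * Ω |v e| / v e)
    (zstar : Fin n → ℝ) (σ : ℝ → ι) (t₀ : ℝ) (z : ℝ → Fin n → ℝ)
    (hz : ∀ t, t₀ ≤ t →
      HasDerivAt z
        (-(D (σ t)).mulVec (F (σ t) ((D (σ t))ᵀ.mulVec (fun i => z t i - zstar i)))) t) :
    ∀ t, t₀ + Tc ≤ t →
      (∀ i, z t i = zstar i + (1 / (n : ℝ)) * ∑ j, (z t₀ j - zstar j)) ∧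
      (∀ i j, z t j - z t i = zstar j - zstar i) := by
  intro t ht
  have hx := consensus_of_hasDerivAt m D hD lam hlam hRay mlow mhigh
    (fun l => hmlow.2 ⟨l, rfl⟩) (fun l => hmhigh.2 ⟨l, rfl⟩) Ω Ωhat β d hΩ Tc hTc κ hκ F hF
    σ t₀ (fun s i => z s i - zstar i) (fun s hs => (hz s hs).sub_const zstar) t ht
  refine ⟨fun i => ?_, fun i j => ?_⟩
  · linarith [hx i]
  · linarith [hx i, hx j]

/-- Corollary on formation control: with gains
κ⁽ˡ⁾ₑ ≥ β(m̲)^d/(λβ(m̄)²T_c), the displacement-based position update rule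
ż = −D_{σ(t)}·F_{σ(t)}(D_{σ(t)}ᵀ(z − z*)) drives z to z* + α𝟏 with
α = (1/n)Σⱼ(zⱼ(t₀) − z*ⱼ) within the predefined time T_c, so the desired formation
z_j − z_i = z*_j − z*_i is reached within T_c. -/
theorem stmt18 {ι : Type} [Fintype ι] [Nonempty ι] {n : ℕ} (hn : 1 ≤ n)
    (m : ι → ℕ) (D : (l : ι) → Matrix (Fin n) (Fin (m l)) ℝ)
    (hD : ∀ l, ∀ j, (∑ i, D l i j) = 0)
    (lam : ℝ) (hlam : 0 < lam)
    (hRay : ∀ l, ∀ δ : Fin n → ℝ, (∑ i, δ i) = 0 →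
      lam * (∑ i, δ i ^ 2) ≤ δ ⬝ᵥ ((D l * (D l)ᵀ).mulVec δ))
    (mlow mhigh : ℕ)
    (hmlow : IsLeast (Set.range m) mlow) (hmhigh : IsGreatest (Set.range m) mhigh)
    (Ω Ωhat : ℝ → ℝ) (β : ℕ → ℝ) (d : ℝ)
    (hΩ : IsPredefinedTimeConsensusFunction Ω Ωhat β d)
    (Tc : ℝ) (hTc : 0 < Tc)
    (κ : (l : ι) → Fin (m l) → ℝ)
    (hκ : ∀ l e, β mlow ^ d / (lam * β mhigh ^ 2 * Tc) ≤ κ l e)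
    (F : (l : ι) → (Fin (m l) → ℝ) → (Fin (m l) → ℝ))
    (hF : ∀ l v e, F l v e = if v e = 0 then 0 else κ l e * Ω |v e| / v e)
    (zstar : Fin n → ℝ) (σ : ℝ → ι) (t₀ : ℝ) (z : ℝ → Fin n → ℝ)
    (hz : ∀ t, t₀ ≤ t →
      HasDerivAt z
        (-(D (σ t)).mulVec (F (σ t) ((D (σ t))ᵀ.mulVec (fun i => z t i - zstar i)))) t) :
    ∀ t, t₀ + Tc ≤ t →
      (∀ i, z t i = zstar i + (1 / (n : ℝ)) * ∑ j, (z t₀ j - zstar j)) ∧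
      (∀ i j, z t j - z t i = zstar j - zstar i) :=
  stmt18_general m D hD lam hlam hRay mlow mhigh hmlow hmhigh Ω Ωhat β d hΩ Tc hTc κ hκ F hF zstar σ
    t₀ z hz
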